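/- Let n ≥ 6, let ψ : {1,…,n} → ℂ and let P be the homogeneous operator of degree 1 associated to ψ. Suppose P is a Rota–Baxter operator of weight 0, i.e. P(x)·P(y) = P(x·P(y) + P(x)·y) for all x, y ∈ A, and suppose ψ(1) = 0. Then ψ(n) = 0, and: (a) if there exists t with 2 ≤ t ≤ ⌊(n−2)/2⌋ and ψ(t) ≠ 0, and t is the least index with ψ(t) ≠ 0, then for every 1 ≤ i ≤ n−1: if (t+1) divides (i+1) then (i+1)·ψ(i) = (t+1)·ψ(t), and otherwise ψ(i) = 0; (b) if ψ(t) = 0 for all 1 ≤ t ≤ ⌊(n−2)/2⌋, then ψ is supported on at most two consecutive indices: for all r, s with ⌊(n−2)/2⌋ < r ≤ n−1, ⌊(n−2)/2⌋ < s ≤ n−1 and s ≥ r + 2, either ψ(r) = 0 or ψ(s) = 0. -/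
import Mathlib


open Finset

/-- Coordinate space of the `n`-dimensional complex null-filiform associative algebra,
with respect to the basis `e_1, …, e_n` (coordinate `m : Fin n` corresponds to `e_{m+1}`). -/
abbrev NF (n : ℕ) : Type := Fin n → ℂ

/-- Multiplication of the null-filiform algebra: `e_i · e_j = e_{i+j}` if `i + j ≤ n`
and `e_i · e_j = 0` if `i + j > n`, extended bilinearly. -/
noncomputable def nfMul {n : ℕ} (x y : NF n) : NF n :=
  fun m => ∑ i : Fin n, ∑ j : Fin n,
    if (i : ℕ) + (j : ℕ) + 1 = (m : ℕ) then x i * y j else 0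

/-- The basis element `e_k`, for `1 ≤ k ≤ n` (it is `0` if `k = 0` or `k > n`). -/
noncomputable def nfE (n k : ℕ) : NF n := fun m => if (m : ℕ) + 1 = k then 1 else 0

/-- The `k`-th power (for `k ≥ 1`) of an element of the null-filiform algebra. -/
noncomputable def nfPow {n : ℕ} (x : NF n) : ℕ → NF n
  | 0 => 0
  | 1 => x
  | k + 2 => nfMul (nfPow x (k + 1)) x

lemma nfMul_smul_left {n : ℕ} (c : ℂ) (x y : NF n) :
    nfMul (c • x) y = c • nfMul x y := by
  funext m
  simp only [nfMul, Pi.smul_apply, smul_eq_mul, Finset.mul_sum, mul_ite, mul_zero]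
  congr 1; funext i; congr 1; funext j; split_ifs <;> ring

lemma nfMul_smul_right {n : ℕ} (c : ℂ) (x y : NF n) :
    nfMul x (c • y) = c • nfMul x y := by
  funext m
  simp only [nfMul, Pi.smul_apply, smul_eq_mul, Finset.mul_sum, mul_ite, mul_zero]
  congr 1; funext i; congr 1; funext j; split_ifs <;> ring

lemma nfE_hi {n k : ℕ} (hk : n < k) : nfE n k = 0 := by
  funext m
  have : ¬((m:ℕ) + 1 = k) := by omega
  simp [nfE, this]

lemma nfMul_e {n : ℕ} {i j : ℕ} (hi : 1 ≤ i) (hj : 1 ≤ j) :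
    nfMul (nfE n i) (nfE n j) = nfE n (i + j) := by
  funext m
  simp only [nfMul, nfE]
  rcases Nat.lt_or_ge n i with hin | hin
  · rw [Finset.sum_eq_zero, if_neg (by omega)]
    intro a _
    rw [Finset.sum_eq_zero]
    intro b _
    have : ¬ ((a:ℕ) + 1 = i) := by omega
    split_ifs with h1 h2 <;> simp_all
  · rcases Nat.lt_or_ge n j with hjn | hjn
    · rw [Finset.sum_eq_zero, if_neg (by omega)]
      intro a _
      rw [Finset.sum_eq_zero]
      intro b _
      have : ¬ ((b:ℕ) + 1 = j) := by omega
      split_ifs with h1 h2 <;> simp_all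
    · rw [Finset.sum_eq_single (⟨i-1, by omega⟩ : Fin n)]
      · rw [Finset.sum_eq_single (⟨j-1, by omega⟩ : Fin n)]
        · simp only [Fin.val_mk]
          split_ifs
          all_goals (try ring)
          all_goals (exfalso; omega)
        · intro b _ hb
          have : ¬ ((b:ℕ) + 1 = j) := by
            intro h; apply hb; apply Fin.ext; simp; omega
          split_ifs <;> simp_all
        · intro h; exact absurd (Finset.mem_univ _) h
      · intro a _ ha
        have : ¬ ((a:ℕ) + 1 = i) := by
          intro h; apply ha; apply Fin.ext; simp; omega
        rw [Finset.sum_eq_zero]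
        intro b _
        split_ifs <;> simp_all
      · intro h; exact absurd (Finset.mem_univ _) h

lemma keyE {n : ℕ} {ψ : ℕ → ℂ} {P : NF n →ₗ[ℂ] NF n}
    (hP : ∀ i, 1 ≤ i → i ≤ n →
      P (nfE n i) = ψ i • nfE n (if i + 1 ≤ n then i + 1 else i + 1 - n))
    (hRB : ∀ x y : NF n, nfMul (P x) (P y) = P (nfMul x (P y) + nfMul (P x) y))
    {a b : ℕ} (ha : 1 ≤ a) (hb : 1 ≤ b) (hab : a + b + 2 ≤ n) :
    ψ a * ψ b = (ψ a + ψ b) * ψ (a + b + 1) := by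
  have hPa : P (nfE n a) = ψ a • nfE n (a + 1) := by
    rw [hP a ha (by omega), if_pos (by omega)]
  have hPb : P (nfE n b) = ψ b • nfE n (b + 1) := by
    rw [hP b hb (by omega), if_pos (by omega)]
  have hPc : P (nfE n (a + b + 1)) = ψ (a + b + 1) • nfE n (a + b + 2) := by
    rw [hP (a + b + 1) (by omega) (by omega), if_pos (by omega)]
  have h := hRB (nfE n a) (nfE n b)
  rw [hPa, hPb] at h
  simp only [nfMul_smul_left, nfMul_smul_right] at h
  rw [nfMul_e (by omega) (by omega), nfMul_e (by omega) (by omega),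
    nfMul_e (by omega) (by omega)] at h
  rw [show a + (b + 1) = a + b + 1 by ring, show a + 1 + b = a + b + 1 by ring,
    show a + 1 + (b + 1) = a + b + 2 by ring] at h
  rw [map_add, map_smul, map_smul, hPc] at h
  have h2 := congrFun h ⟨a + b + 1, by omega⟩
  simp only [Pi.smul_apply, Pi.add_apply, smul_eq_mul, nfE, Fin.val_mk] at h2
  simp only [if_pos rfl, if_true] at h2
  ring_nf at h2 ⊢
  linear_combination h2

lemma psi_n_eq {n : ℕ} (hn : 2 ≤ n) {ψ : ℕ → ℂ} {P : NF n →ₗ[ℂ] NF n}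
    (hP : ∀ i, 1 ≤ i → i ≤ n →
      P (nfE n i) = ψ i • nfE n (if i + 1 ≤ n then i + 1 else i + 1 - n))
    (hRB : ∀ x y : NF n, nfMul (P x) (P y) = P (nfMul x (P y) + nfMul (P x) y)) :
    ψ n = 0 := by
  have hPn : P (nfE n n) = ψ n • nfE n 1 := by
    rw [hP n (by omega) le_rfl, if_neg (by omega), show n + 1 - n = 1 by omega]
  have h := hRB (nfE n n) (nfE n n)
  rw [hPn] at h
  simp only [nfMul_smul_left, nfMul_smul_right] at h
  rw [nfMul_e (by omega) (by omega), nfMul_e (by omega) (by omega),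
    nfMul_e (by omega) (by omega)] at h
  rw [show (1:ℕ) + n = n + 1 by ring] at h
  rw [nfE_hi (show n < n + 1 by omega)] at h
  simp only [smul_zero, add_zero, map_zero] at h
  have h2 := congrFun h ⟨1, by omega⟩
  simp only [Pi.smul_apply, smul_eq_mul, nfE, Fin.val_mk, Pi.zero_apply] at h2
  simp only [if_pos rfl, if_true] at h2
  have : ψ n * ψ n = 0 := by linear_combination h2
  exact mul_self_eq_zero.mp this

/-- Rota–Baxter operator of weight `0` and degree `1` with `ψ(1) = 0`:
then `ψ(n) = 0` and (a) if `t` is the least index with `ψ(t) ≠ 0` and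
`2 ≤ t ≤ ⌊(n−2)/2⌋`, then `(i+1)ψ(i) = (t+1)ψ(t)` when `(t+1) ∣ (i+1)` and `ψ(i) = 0`
otherwise; (b) if `ψ` vanishes on `{1, …, ⌊(n−2)/2⌋}`, then `ψ` is supported on at most
two consecutive indices. -/
theorem rota_baxter_weight0_degree1_psi1_eq_zero (n : ℕ) (hn : 6 ≤ n)
    (ψ : ℕ → ℂ) (P : NF n →ₗ[ℂ] NF n)
    (hP : ∀ i, 1 ≤ i → i ≤ n →
      P (nfE n i) = ψ i • nfE n (if i + 1 ≤ n then i + 1 else i + 1 - n))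
    (hRB : ∀ x y : NF n,
      nfMul (P x) (P y) = P (nfMul x (P y) + nfMul (P x) y))
    (h1 : ψ 1 = 0) :
    ψ n = 0 ∧
    (∀ t, 2 ≤ t → t ≤ (n - 2) / 2 → ψ t ≠ 0 →
      (∀ s, 1 ≤ s → s < t → ψ s = 0) →
      ∀ i, 1 ≤ i → i ≤ n - 1 →
        ((t + 1) ∣ (i + 1) → ((i : ℂ) + 1) * ψ i = ((t : ℂ) + 1) * ψ t) ∧
        (¬ (t + 1) ∣ (i + 1) → ψ i = 0)) ∧
    ((∀ t, 1 ≤ t → t ≤ (n - 2) / 2 → ψ t = 0) →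
      ∀ r s, (n - 2) / 2 < r → r ≤ n - 1 → (n - 2) / 2 < s → s ≤ n - 1 →
        r + 2 ≤ s → ψ r = 0 ∨ ψ s = 0) := by
  have E : ∀ a b : ℕ, 1 ≤ a → 1 ≤ b → a + b + 2 ≤ n →
      ψ a * ψ b = (ψ a + ψ b) * ψ (a + b + 1) :=
    fun a b ha hb hab => keyE hP hRB ha hb hab
  refine ⟨psi_n_eq (by omega) hP hRB, ?_, ?_⟩
  · intro t ht2 htn htne hzero
    have ht1 : (1:ℕ) ≤ t := by omega
    have h2t : 2 * t + 2 ≤ n := by omega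
    -- values at multiples of t+1 (minus one)
    have hM : ∀ k, 1 ≤ k → k * (t + 1) ≤ n → (k : ℂ) * ψ (k * (t + 1) - 1) = ψ t := by
      intro k
      induction k with
      | zero => intro h; exact absurd h (by omega)
      | succ k ih =>
        intro _ hkn
        rcases Nat.eq_zero_or_pos k with hk0 | hk1
        · subst hk0
          rw [show (0 + 1) * (t + 1) - 1 = t by omega]
          norm_num
        · have hmul : (k + 1) * (t + 1) = k * (t + 1) + (t + 1) := by ring
          have hkn' : k * (t + 1) ≤ n := by omega
          have ihk := ih hk1 hkn'
          have hble : t + 1 ≤ k * (t + 1) := Nat.le_mul_of_pos_left _ hk1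
          set b := k * (t + 1) - 1 with hbdef
          have hb1 : 1 ≤ b := by omega
          have eq := E t b ht1 hb1 (by omega)
          rw [show t + b + 1 = (k + 1) * (t + 1) - 1 by omega] at eq
          have hbne : ψ b ≠ 0 := by
            intro h0; rw [h0, mul_zero] at ihk; exact htne ihk.symm
          have key : ψ b * ((k:ℂ) * ψ b)
              = ψ b * (((k:ℂ) + 1) * ψ ((k + 1) * (t + 1) - 1)) := by
            linear_combination eq + (ψ b - ψ ((k + 1) * (t + 1) - 1)) * ihk
          have key2 := mul_left_cancel₀ hbne key
          rw [ihk] at key2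
          push_cast
          linear_combination -key2
    have hMne : ∀ k, 1 ≤ k → k * (t + 1) ≤ n → ψ (k * (t + 1) - 1) ≠ 0 := by
      intro k hk hkn h0
      have h := hM k hk hkn
      rw [h0, mul_zero] at h
      exact htne h.symm
    have h2t1 : ψ (2 * (t + 1) - 1) ≠ 0 := hMne 2 (by omega) (by omega)
    have hQ1 : ψ (t + 1) = 0 := by
      have eq := E (t - 1) (t + 1) (by omega) (by omega) (by omega)
      rw [hzero (t - 1) (by omega) (by omega),
        show t - 1 + (t + 1) + 1 = 2 * (t + 1) - 1 by omega] at eq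
      simp only [zero_mul, zero_add] at eq
      exact (mul_eq_zero.mp eq.symm).resolve_right h2t1
    have hR1 : ∀ q, 1 ≤ q → q * (t + 1) ≤ n - 1 → ψ (q * (t + 1)) = 0 := by
      intro q
      induction q with
      | zero => intro h; exact absurd h (by omega)
      | succ q ih =>
        intro _ hqn
        rcases Nat.eq_zero_or_pos q with h0 | hq1
        · subst h0; rw [show (0 + 1) * (t + 1) = t + 1 by ring]; exact hQ1
        · have hmul : (q + 1) * (t + 1) = q * (t + 1) + (t + 1) := by ring
          have hq' : q * (t + 1) ≤ n - 1 := by omega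
          have ihq := ih hq1 hq'
          have hqb : 1 ≤ q * (t + 1) := by
            have := Nat.le_mul_of_pos_left (t + 1) hq1; omega
          have eq := E t (q * (t + 1)) ht1 hqb (by omega)
          rw [ihq, show t + q * (t + 1) + 1 = (q + 1) * (t + 1) by omega] at eq
          simp only [mul_zero, add_zero] at eq
          exact (mul_eq_zero.mp eq.symm).resolve_left htne
    intro i hi1 hin
    constructor
    · intro hdvd
      obtain ⟨k, hk⟩ := hdvd
      have hk1 : 1 ≤ k := by
        rcases Nat.eq_zero_or_pos k with h0 | h1
        · rw [h0, mul_zero] at hk; omega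
        · exact h1
      have hik : k * (t + 1) = i + 1 := by rw [mul_comm]; omega
      have h := hM k hk1 (by omega)
      rw [show k * (t + 1) - 1 = i by omega] at h
      have hc : (i:ℂ) + 1 = ((t:ℂ) + 1) * (k:ℂ) := by
        have h' := congrArg (fun m : ℕ => (m:ℂ)) hk
        push_cast at h'
        exact h'
      rw [hc]
      linear_combination ((t:ℂ) + 1) * h
    · intro hndvd
      have hdm := Nat.div_add_mod (i + 1) (t + 1)
      set q := (i + 1) / (t + 1) with hqdef
      set r := (i + 1) % (t + 1) with hrdef
      have hr0 : r ≠ 0 := fun h => hndvd (Nat.dvd_of_mod_eq_zero h)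
      have hrlt : r < t + 1 := Nat.mod_lt _ (by omega)
      rcases Nat.lt_or_ge r 2 with hr1 | hr2
      · -- r = 1
        have hq1 : 1 ≤ q := by
          rcases Nat.eq_zero_or_pos q with h0 | h1
          · rw [h0, mul_zero] at hdm; omega
          · exact h1
        have hiq : q * (t + 1) = i := by rw [mul_comm]; omega
        rw [← hiq]
        exact hR1 q hq1 (by omega)
      · rcases Nat.eq_zero_or_pos q with h0 | hq1
        · apply hzero i hi1
          rw [h0, mul_zero] at hdm
          omega
        · have hcomm : q * (t + 1) = (t + 1) * q := mul_comm _ _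
          have hqa : t + 1 ≤ q * (t + 1) := Nat.le_mul_of_pos_left _ hq1
          have eq := E (q * (t + 1) - 1) (r - 1) (by omega) (by omega) (by omega)
          rw [hzero (r - 1) (by omega) (by omega),
            show q * (t + 1) - 1 + (r - 1) + 1 = i by omega] at eq
          simp only [mul_zero, add_zero] at eq
          exact (mul_eq_zero.mp eq.symm).resolve_left (hMne q hq1 (by omega))
  · intro hvanish r s hr1 hr2 hs1 hs2 hrs
    have hb1 : 1 ≤ s - r - 1 := by omega
    have hz := hvanish (s - r - 1) hb1 (by omega)
    have eq := E r (s - r - 1) (by omega) hb1 (by omega)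
    rw [hz, show r + (s - r - 1) + 1 = s by omega] at eq
    simp only [mul_zero, add_zero] at eq
    exact mul_eq_zero.mp eq.symm
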